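/- arXiv:1008.3126 — 3 statements merged into one kernel-verified Lean document; each statement's English description precedes it below -/
import Mathlib

section
/- For V ∈ M_d(C), k ∈ {1,…,d}, and λ ≥ 0, the map φ_λ(x) = Tr(x)·1 − λ V x V* on M_d(C) is k-positive if and only if λ ‖V‖_{(k)}² ≤ 1, where ‖V‖_{(k)}² is the sum of the k largest eigenvalues of V V*. -/
open scoped Matrix ComplexOrder

/-- A map `φ : M_ι(ℂ) → M_ι(ℂ)` is `k`-positive if `φ ⊗ id_{M_k(ℂ)}` maps positive
semidefinite matrices to positive semidefinite matrices. -/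
def kPositive {ι : Type} [Fintype ι] [DecidableEq ι] (k : ℕ)
    (φ : Matrix ι ι ℂ → Matrix ι ι ℂ) : Prop :=
  ∀ X : Matrix (ι × Fin k) (ι × Fin k) ℂ, X.PosSemidef →
    Matrix.PosSemidef (Matrix.of fun p q : ι × Fin k =>
      φ (Matrix.of fun i j : ι => X (i, p.2) (j, q.2)) p.1 q.1)

/-!
Reading `ψ, η ∈ ℂ^d ⊗ ℂ^k` as `d × k` matrices `M, N`, one computes
`⟨η, (φ_λ ⊗ id)(ψψ*) η⟩ = ‖M Nᴴ‖² - λ |Tr(Nᴴ V M)|²` (Frobenius norm). Rank-one projections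
generate the positive cone, so `φ_λ` is `k`-positive iff `λ |Tr(Nᴴ V M)|² ≤ ‖M Nᴴ‖²` for all
`M, N`. If `P` is the orthogonal projection onto the column space of `N`, then
`Tr(Nᴴ V M) = Tr(P V · M Nᴴ)`; Cauchy–Schwarz and Ky Fan's maximum principle
`Tr(P V Vᴴ) ≤ ‖V‖_{(k)}²` (as `rank P ≤ k`) give `|Tr(Nᴴ V M)|² ≤ ‖V‖_{(k)}² ‖M Nᴴ‖²`, with
equality when the columns of `N` are orthonormal top-`k` eigenvectors of `V Vᴴ` and `M = Vᴴ N`.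
-/

open Complex Matrix Function Finset
open scoped Kronecker

lemma Antitone.sum_mul_le_sum_filter_lt {d k : ℕ} (hk1 : 1 ≤ k) (hkd : k ≤ d) {σ t : Fin d → ℝ}
    (hσ : Antitone σ) (hσ0 : ∀ i, 0 ≤ σ i) (ht0 : ∀ i, 0 ≤ t i) (ht1 : ∀ i, t i ≤ 1)
    (hts : ∑ i, t i ≤ k) :
    ∑ i, σ i * t i ≤ ∑ i ∈ univ.filter (fun i : Fin d => (i : ℕ) < k), σ i := by
  -- `c` separates the `k` largest values of `σ` from the others
  set c := σ ⟨k - 1, by omega⟩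
  have hterm (i : Fin d) :
      σ i * t i ≤ (if (i : ℕ) < k then σ i else 0) + c * (t i - if (i : ℕ) < k then 1 else 0) := by
    split_ifs with hi
    · have : c ≤ σ i := hσ (Fin.le_iff_val_le_val.mpr (by simp; omega))
      nlinarith [ht1 i]
    · have : σ i ≤ c := hσ (Fin.le_iff_val_le_val.mpr (by simp; omega))
      nlinarith [ht0 i]
  have hcard : ∑ i : Fin d, (if (i : ℕ) < k then (1 : ℝ) else 0) = k := by
    rw [Finset.sum_boole, Fin.card_filter_val_lt, min_eq_right hkd]
  calc ∑ i, σ i * t i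
      ≤ ∑ i : Fin d,
          ((if (i : ℕ) < k then σ i else 0) + c * (t i - if (i : ℕ) < k then 1 else 0)) :=
        Finset.sum_le_sum fun i _ => hterm i
    _ = ∑ i ∈ univ.filter (fun i : Fin d => (i : ℕ) < k), σ i + c * (∑ i, t i - k) := by
        rw [Finset.sum_add_distrib, ← Finset.mul_sum, Finset.sum_sub_distrib, hcard,
          Finset.sum_filter]
    _ ≤ ∑ i ∈ univ.filter (fun i : Fin d => (i : ℕ) < k), σ i := by
        nlinarith [hσ0 ⟨k - 1, by omega⟩]

lemma Fin.sum_filter_val_lt_eq_sum_castLE {M : Type*} [AddCommMonoid M] {d k : ℕ} (hkd : k ≤ d)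
    (f : Fin d → M) :
    ∑ i ∈ univ.filter (fun i : Fin d => (i : ℕ) < k), f i = ∑ a : Fin k, f (Fin.castLE hkd a) := by
  have hfilter : univ.filter (fun i : Fin d => (i : ℕ) < k) = univ.map (Fin.castLEEmb hkd) := by
    ext i
    simp only [mem_filter, mem_univ, true_and, mem_map]
    exact ⟨fun h => ⟨⟨i, h⟩, rfl⟩, by rintro ⟨a, -, rfl⟩; exact a.2⟩
  rw [hfilter, Finset.sum_map]
  rfl

namespace Matrix

section BlockMap

variable {ι : Type} {κ : Type*}

/-- `blockMap φ X` is `(φ ⊗ id) X`: `X` is read as a `κ × κ` array of `ι × ι` blocks and `φ` is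
applied to each block. -/
def blockMap (φ : Matrix ι ι ℂ → Matrix ι ι ℂ) (X : Matrix (ι × κ) (ι × κ) ℂ) :
    Matrix (ι × κ) (ι × κ) ℂ :=
  of fun p q => φ (of fun i j => X (i, p.2) (j, q.2)) p.1 q.1

lemma blockMap_conjTranspose {φ : Matrix ι ι ℂ → Matrix ι ι ℂ} (hφ : ∀ x, φ xᴴ = (φ x)ᴴ)
    (X : Matrix (ι × κ) (ι × κ) ℂ) : blockMap φ Xᴴ = (blockMap φ X)ᴴ := by
  ext p q
  change φ (of fun i j => X (i, q.2) (j, p.2))ᴴ p.1 q.1 = _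
  rw [hφ]
  rfl

lemma IsHermitian.blockMap {φ : Matrix ι ι ℂ → Matrix ι ι ℂ} (hφ : ∀ x, φ xᴴ = (φ x)ᴴ)
    {X : Matrix (ι × κ) (ι × κ) ℂ} (hX : X.IsHermitian) : (blockMap φ X).IsHermitian := by
  rw [IsHermitian, ← blockMap_conjTranspose hφ, hX.eq]

lemma blockMap_sum {α : Type*} (φ : Matrix ι ι ℂ →+ Matrix ι ι ℂ) (s : Finset α)
    (X : α → Matrix (ι × κ) (ι × κ) ℂ) :
    blockMap φ (∑ r ∈ s, X r) = ∑ r ∈ s, blockMap φ (X r) := by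
  ext p q
  have hblock : (of fun i j => (∑ r ∈ s, X r) (i, p.2) (j, q.2))
      = ∑ r ∈ s, of fun i j => X r (i, p.2) (j, q.2) := by
    ext i j
    simp [Matrix.sum_apply]
  rw [blockMap, of_apply, hblock, map_sum, Matrix.sum_apply, Matrix.sum_apply]
  rfl

lemma blockMap_conj [Fintype ι] [Fintype κ] [DecidableEq κ] (V : Matrix ι ι ℂ)
    (X : Matrix (ι × κ) (ι × κ) ℂ) :
    blockMap (fun x => V * x * Vᴴ) X = (V ⊗ₖ 1) * X * (V ⊗ₖ 1)ᴴ := by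
  ext p q
  rw [conjTranspose_kronecker, conjTranspose_one]
  simp only [blockMap, of_apply, mul_apply, conjTranspose_apply, kroneckerMap_apply, one_apply,
    Fintype.sum_prod_type, Finset.sum_mul, mul_ite, mul_one, mul_zero, ite_mul, zero_mul,
    Finset.sum_ite_eq, Finset.sum_ite_eq', Finset.mem_univ, if_true]

lemma star_dotProduct_blockMap_trace_smul_one [Fintype ι] [Fintype κ] [DecidableEq ι]
    (ψ η : ι × κ → ℂ) :
    star η ⬝ᵥ blockMap (fun x => x.trace • (1 : Matrix ι ι ℂ)) (vecMulVec ψ (star ψ)) *ᵥ η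
      = ((of (curry ψ) * (of (curry η))ᴴ)ᴴ * (of (curry ψ) * (of (curry η))ᴴ)).trace := by
  simp only [dotProduct, mulVec, blockMap, of_apply, trace, diag, mul_apply, smul_apply,
    one_apply, vecMulVec_apply, Fintype.sum_prod_type, Pi.star_apply, conjTranspose_apply,
    star_sum, star_mul', star_star, smul_eq_mul, mul_ite, mul_one, mul_zero, ite_mul, zero_mul,
    Finset.sum_ite_irrel, Finset.sum_const_zero, Finset.sum_ite_eq, Finset.mem_univ, if_true,
    Finset.mul_sum, Finset.sum_mul, curry_apply]
  refine Finset.sum_congr rfl fun i _ => ?_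
  rw [Finset.sum_comm_cycle]
  refine Finset.sum_congr rfl fun m _ => Finset.sum_congr rfl fun b _ =>
    Finset.sum_congr rfl fun a _ => ?_
  ring

lemma kPositive_iff_forall_vecMulVec [Fintype ι] [DecidableEq ι] {k : ℕ}
    (φ : Matrix ι ι ℂ →+ Matrix ι ι ℂ) :
    kPositive k φ ↔ ∀ ψ : ι × Fin k → ℂ, (blockMap φ (vecMulVec ψ (star ψ))).PosSemidef := by
  refine ⟨fun h ψ => h _ (posSemidef_vecMulVec_self_star ψ), fun h X hX => ?_⟩
  obtain ⟨m, v, rfl⟩ := posSemidef_iff_eq_sum_vecMulVec.mp hX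
  rw [← blockMap, blockMap_sum]
  exact posSemidef_sum _ fun r _ => h (v r)

end BlockMap

lemma star_dotProduct_kronecker_one_mulVec {ι κ : Type*} [Fintype ι] [Fintype κ] [DecidableEq κ]
    (V : Matrix ι ι ℂ) (ψ η : ι × κ → ℂ) :
    star η ⬝ᵥ (V ⊗ₖ 1) *ᵥ ψ = ((of (curry η))ᴴ * V * of (curry ψ)).trace := by
  simp only [dotProduct, mulVec, trace, diag, mul_apply, kroneckerMap_apply, one_apply,
    Fintype.sum_prod_type, Finset.mul_sum, Finset.sum_mul, mul_ite, mul_one, mul_zero, ite_mul,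
    zero_mul, Finset.sum_ite_eq, Finset.mem_univ, if_true, of_apply, curry_apply, Pi.star_apply,
    conjTranspose_apply]
  rw [Finset.sum_comm_cycle, Finset.sum_comm_cycle]
  simp only [mul_assoc]

lemma star_dotProduct_vecMulVec_mulVec {R n : Type*} [CommSemiring R] [StarRing R] [Fintype n]
    (u v : n → R) :
    star v ⬝ᵥ vecMulVec u (star u) *ᵥ v = star (star v ⬝ᵥ u) * (star v ⬝ᵥ u) := by
  rw [vecMulVec_mulVec, op_smul_eq_smul, dotProduct_smul, smul_eq_mul, star_dotProduct u v,
    mul_comm]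

section TraceSubConj

variable {ι : Type} [Fintype ι] [DecidableEq ι]

def traceSubConj (V : Matrix ι ι ℂ) (c : ℂ) : Matrix ι ι ℂ →+ Matrix ι ι ℂ :=
  AddMonoidHom.mk' (fun x => x.trace • 1 - c • (V * x * Vᴴ)) fun x y => by
    simp only [trace_add, add_smul, Matrix.mul_add, Matrix.add_mul, smul_add]
    abel

lemma traceSubConj_conjTranspose (V : Matrix ι ι ℂ) (lam : ℝ) (x : Matrix ι ι ℂ) :
    traceSubConj V lam xᴴ = (traceSubConj V lam x)ᴴ := by
  simp [traceSubConj, conjTranspose_sub, conjTranspose_smul, trace_conjTranspose,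
    Matrix.mul_assoc]

lemma star_dotProduct_blockMap_traceSubConj {κ : Type*} [Fintype κ] [DecidableEq κ]
    (V : Matrix ι ι ℂ) (c : ℂ) (ψ η : ι × κ → ℂ) :
    star η ⬝ᵥ blockMap (traceSubConj V c) (vecMulVec ψ (star ψ)) *ᵥ η
      = ((of (curry ψ) * (of (curry η))ᴴ)ᴴ * (of (curry ψ) * (of (curry η))ᴴ)).trace
        - c * normSq ((of (curry η))ᴴ * V * of (curry ψ)).trace := by
  have hsplit : blockMap (traceSubConj V c) (vecMulVec ψ (star ψ))
      = blockMap (fun x => x.trace • (1 : Matrix ι ι ℂ)) (vecMulVec ψ (star ψ))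
        - c • blockMap (fun x => V * x * Vᴴ) (vecMulVec ψ (star ψ)) := by
    ext p q
    simp [blockMap, traceSubConj]
  rw [hsplit, sub_mulVec, dotProduct_sub, smul_mulVec, dotProduct_smul,
    star_dotProduct_blockMap_trace_smul_one, blockMap_conj, mul_vecMulVec, vecMulVec_mul,
    ← star_mulVec, star_dotProduct_vecMulVec_mulVec, star_dotProduct_kronecker_one_mulVec,
    normSq_eq_conj_mul_self, smul_eq_mul]
  rfl

lemma kPositive_traceSubConj_iff {k : ℕ} (V : Matrix ι ι ℂ) (lam : ℝ) :
    kPositive k (traceSubConj V lam) ↔ ∀ M N : Matrix ι (Fin k) ℂ,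
      lam * normSq (Nᴴ * V * M).trace ≤ ((M * Nᴴ)ᴴ * (M * Nᴴ)).trace.re := by
  have hre (A : Matrix ι ι ℂ) : (((Aᴴ * A).trace.re : ℝ) : ℂ) = (Aᴴ * A).trace :=
    conj_eq_iff_re.mp (by
      rw [← star_def, ← trace_conjTranspose, conjTranspose_mul, conjTranspose_conjTranspose])
  have hqf (ψ η : ι × Fin k → ℂ) :
      (0 ≤ star η ⬝ᵥ blockMap (traceSubConj V lam) (vecMulVec ψ (star ψ)) *ᵥ η) ↔
        lam * normSq ((of (curry η))ᴴ * V * of (curry ψ)).trace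
          ≤ ((of (curry ψ) * (of (curry η))ᴴ)ᴴ * (of (curry ψ) * (of (curry η))ᴴ)).trace.re := by
    rw [star_dotProduct_blockMap_traceSubConj, ← hre, ← ofReal_mul, ← ofReal_sub, zero_le_real,
      sub_nonneg, ofReal_re]
  rw [kPositive_iff_forall_vecMulVec]
  refine ⟨fun h M N => ?_, fun h ψ => ?_⟩
  · exact (hqf (fun p => M p.1 p.2) (fun p => N p.1 p.2)).mp
      ((h fun p => M p.1 p.2).dotProduct_mulVec_nonneg fun p => N p.1 p.2)
  · exact .of_dotProduct_mulVec_nonneg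
      ((posSemidef_vecMulVec_self_star ψ).isHermitian.blockMap (traceSubConj_conjTranspose V lam))
      fun η => (hqf ψ η).mpr (h _ _)

end TraceSubConj

lemma normSq_trace_conjTranspose_mul_le {m n : Type*} [Fintype m] [Fintype n]
    (A B : Matrix m n ℂ) :
    normSq (Aᴴ * B).trace ≤ (Aᴴ * A).trace.re * (Bᴴ * B).trace.re := by
  have h := inner_mul_inner_self_le (𝕜 := ℂ) (WithLp.toLp 2 A.vec) (WithLp.toLp 2 B.vec)
  simp only [EuclideanSpace.inner_toLp_toLp, dotProduct_comm _ (star _),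
    star_vec_dotProduct_vec] at h
  rw [show Bᴴ * A = (Aᴴ * B)ᴴ by rw [conjTranspose_mul, conjTranspose_conjTranspose],
    trace_conjTranspose, norm_star, ← sq, ← normSq_eq_norm_sq] at h
  exact h

lemma exists_isStarProjection_mul_eq_self_and_trace_eq_rank {ι κ : Type*} [Fintype ι]
    [DecidableEq ι] [Fintype κ] (N : Matrix ι κ ℂ) :
    ∃ P : Matrix ι ι ℂ, IsStarProjection P ∧ P * N = N ∧ P.trace = N.rank := by
  have hK := isHermitian_mul_conjTranspose_self N
  set ν := hK.eigenvalues
  set U : Matrix ι ι ℂ := (hK.eigenvectorUnitary : Matrix ι ι ℂ)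
  have hUU : star U * U = 1 := Unitary.coe_star_mul_self _
  have hspec : N * Nᴴ = U * diagonal (ofReal ∘ ν) * star U := hK.spectral_theorem
  set χ : ι → ℂ := fun i => if ν i = 0 then 0 else 1
  have hχχ : (fun i => χ i * χ i) = χ := by
    ext i
    by_cases h : ν i = 0 <;> simp [χ, h]
  have hχν : (fun i => χ i * (ofReal ∘ ν) i) = ofReal ∘ ν := by
    ext i
    by_cases h : ν i = 0 <;> simp [χ, h]
  set P := U * diagonal χ * star U
  have hP : IsStarProjection P := by
    refine ⟨?_, isHermitian_mul_mul_conjTranspose U (isHermitian_diagonal_of_self_adjoint χ ?_)⟩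
    · calc P * P = U * (diagonal χ * (star U * U) * diagonal χ) * star U := by
            simp only [P, Matrix.mul_assoc]
        _ = P := by rw [hUU, Matrix.mul_one, diagonal_mul_diagonal, hχχ]
    · ext i
      by_cases h : ν i = 0 <;> simp [χ, h]
  have hPK : P * (N * Nᴴ) = N * Nᴴ :=
    calc P * (N * Nᴴ) = U * (diagonal χ * (star U * U) * diagonal (ofReal ∘ ν)) * star U := by
          rw [hspec]
          simp only [P, Matrix.mul_assoc]
      _ = N * Nᴴ := by rw [hUU, Matrix.mul_one, diagonal_mul_diagonal, hχν, hspec]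
  have hPN : (1 - P) * N = 0 :=
    (mul_self_mul_conjTranspose_eq_zero N (1 - P)).mp
      (by rw [Matrix.sub_mul, Matrix.one_mul, hPK, sub_self])
  refine ⟨P, hP, ?_, ?_⟩
  · rwa [Matrix.sub_mul, Matrix.one_mul, sub_eq_zero, eq_comm] at hPN
  · rw [trace_mul_cycle, hUU, Matrix.one_mul, trace_diagonal, ← rank_self_mul_conjTranspose,
      hK.rank_eq_card_non_zero_eigs, Fintype.card_subtype]
    simp [χ, Finset.sum_ite, Finset.filter_not, ν]

lemma PosSemidef.of_isStarProjection {n : Type*} [Fintype n] {P : Matrix n n ℂ}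
    (hP : IsStarProjection P) : P.PosSemidef := by
  have hPP : P = Pᴴ * P := by
    rw [← star_eq_conjTranspose, hP.isSelfAdjoint.star_eq, hP.isIdempotentElem.eq]
  rw [hPP]
  exact posSemidef_conjTranspose_mul_self P

lemma IsHermitian.trace_mul_eq_sum {n : Type*} [Fintype n] [DecidableEq n]
    {H : Matrix n n ℂ} (hH : H.IsHermitian) (Q : Matrix n n ℂ) :
    (Q * H).trace = ∑ j, (star (hH.eigenvectorUnitary : Matrix n n ℂ) * Q *
      hH.eigenvectorUnitary) j j * hH.eigenvalues j := by
  conv_lhs => rw [hH.spectral_theorem, Unitary.conjStarAlgAut_apply, ← Matrix.mul_assoc,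
    ← Matrix.mul_assoc, trace_mul_cycle, ← Matrix.mul_assoc]
  simp [trace, mul_diagonal]

lemma PosSemidef.re_trace_mul_le_sum_filter_lt {d k : ℕ} (hk1 : 1 ≤ k) (hkd : k ≤ d)
    {H : Matrix (Fin d) (Fin d) ℂ} (hH : H.PosSemidef) {σ : Fin d → ℝ} (hσ : Antitone σ)
    {e : Equiv.Perm (Fin d)} (he : ∀ i, σ i = hH.1.eigenvalues (e i))
    {Q : Matrix (Fin d) (Fin d) ℂ} (hQ : Q.PosSemidef) (hQ1 : (1 - Q).PosSemidef)
    (hQk : Q.trace.re ≤ k) :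
    (Q * H).trace.re ≤ ∑ i ∈ univ.filter (fun i : Fin d => (i : ℕ) < k), σ i := by
  set U : Matrix (Fin d) (Fin d) ℂ := (hH.1.eigenvectorUnitary : Matrix (Fin d) (Fin d) ℂ)
  have hUU : star U * U = 1 := Unitary.coe_star_mul_self _
  have hUU' : U * star U = 1 := Unitary.coe_mul_star_self _
  set R := star U * Q * U
  have hR : R.PosSemidef := hQ.conjTranspose_mul_mul_same U
  have hR1 : (1 - R).PosSemidef := by
    have h1R : 1 - R = Uᴴ * (1 - Q) * U := by
      rw [Matrix.mul_sub, Matrix.sub_mul, Matrix.mul_one, ← star_eq_conjTranspose, hUU]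
    rw [h1R]
    exact hQ1.conjTranspose_mul_mul_same U
  set t : Fin d → ℝ := fun j => (R j j).re
  have htrace : (Q * H).trace.re = ∑ i, σ i * t (e i) := by
    rw [hH.1.trace_mul_eq_sum, re_sum, ← Equiv.sum_comp e]
    refine Finset.sum_congr rfl fun i _ => ?_
    rw [re_mul_ofReal, he, mul_comm]
  have hts : ∑ j, t j = Q.trace.re := by
    have hRQ : R.trace = Q.trace := by
      rw [trace_mul_cycle, hUU', Matrix.one_mul]
    rw [← hRQ, trace, re_sum]
    rfl
  rw [htrace]
  refine hσ.sum_mul_le_sum_filter_lt hk1 hkd (fun i => he i ▸ hH.eigenvalues_nonneg _)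
    (fun i => (le_def.mp hR.diag_nonneg).1) (fun i => ?_) ?_
  · simpa [t] using (le_def.mp hR1.diag_nonneg).1
  · rwa [Equiv.sum_comp e t, hts]

lemma normSq_trace_le_sum_filter_lt_mul {d k : ℕ} (hk1 : 1 ≤ k) (hkd : k ≤ d)
    {V : Matrix (Fin d) (Fin d) ℂ} {σ : Fin d → ℝ} (hσ : Antitone σ) {e : Equiv.Perm (Fin d)}
    (he : ∀ i, σ i = (isHermitian_mul_conjTranspose_self V).eigenvalues (e i))
    (M N : Matrix (Fin d) (Fin k) ℂ) :
    normSq (Nᴴ * V * M).trace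
      ≤ (∑ i ∈ univ.filter (fun i : Fin d => (i : ℕ) < k), σ i)
        * ((M * Nᴴ)ᴴ * (M * Nᴴ)).trace.re := by
  obtain ⟨P, hP, hPN, hPtr⟩ := exists_isStarProjection_mul_eq_self_and_trace_eq_rank N
  have hPH : Pᴴ = P := hP.isSelfAdjoint.star_eq
  have hNP : Nᴴ * P = Nᴴ := by rw [← hPH, ← conjTranspose_mul, hPN]
  have ht : (Nᴴ * V * M).trace = ((P * V)ᴴᴴ * (M * Nᴴ)).trace :=
    calc (Nᴴ * V * M).trace = (Nᴴ * P * V * M).trace := by rw [hNP]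
      _ = ((P * V)ᴴᴴ * (M * Nᴴ)).trace := by
        rw [conjTranspose_conjTranspose, trace_mul_comm, trace_mul_comm (P * V)]
        simp only [Matrix.mul_assoc]
  have hPV : ((P * V)ᴴᴴ * (P * V)ᴴ).trace = (P * (V * Vᴴ)).trace :=
    calc ((P * V)ᴴᴴ * (P * V)ᴴ).trace = (P * (V * Vᴴ) * P).trace := by
          rw [conjTranspose_conjTranspose, conjTranspose_mul, hPH]
          simp only [Matrix.mul_assoc]
      _ = (P * P * (V * Vᴴ)).trace := trace_mul_cycle _ _ _
      _ = (P * (V * Vᴴ)).trace := by rw [hP.isIdempotentElem.eq]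
  have hky : (P * (V * Vᴴ)).trace.re ≤ ∑ i ∈ univ.filter (fun i : Fin d => (i : ℕ) < k), σ i :=
    (posSemidef_self_mul_conjTranspose V).re_trace_mul_le_sum_filter_lt hk1 hkd hσ he
      (.of_isStarProjection hP) (.of_isStarProjection hP.one_sub) (by
        rw [hPtr, natCast_re, Nat.cast_le]
        exact (rank_le_card_width N).trans (Fintype.card_fin k).le)
  rw [ht]
  refine (normSq_trace_conjTranspose_mul_le _ _).trans ?_
  rw [hPV]
  exact mul_le_mul_of_nonneg_right hky
    (le_def.mp (posSemidef_conjTranspose_mul_self _).trace_nonneg).1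

lemma IsHermitian.exists_isometry_trace_eq_sum_filter_lt {d k : ℕ} (hkd : k ≤ d)
    {H : Matrix (Fin d) (Fin d) ℂ} (hH : H.IsHermitian) {σ : Fin d → ℝ}
    {e : Equiv.Perm (Fin d)} (he : ∀ i, σ i = hH.eigenvalues (e i)) :
    ∃ N : Matrix (Fin d) (Fin k) ℂ, Nᴴ * N = 1 ∧
      (Nᴴ * H * N).trace = ∑ i ∈ univ.filter (fun i : Fin d => (i : ℕ) < k), σ i := by
  set ι : Fin k ↪ Fin d := (Fin.castLEEmb hkd).trans e.toEmbedding
  set U : Matrix (Fin d) (Fin d) ℂ := (hH.eigenvectorUnitary : Matrix (Fin d) (Fin d) ℂ)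
  have hconj (A : Matrix (Fin d) (Fin d) ℂ) :
      (U.submatrix id ι)ᴴ * A * U.submatrix id ι = (star U * A * U).submatrix ι ι := by
    ext a b
    simp [mul_apply, star_eq_conjTranspose, Finset.sum_mul]
  have hUU : star U * U = 1 := Unitary.coe_star_mul_self _
  have hdiag : star U * H * U = diagonal (ofReal ∘ hH.eigenvalues) := by
    simpa using hH.conjStarAlgAut_star_eigenvectorUnitary
  refine ⟨U.submatrix id ι, ?_, ?_⟩
  · simpa [hUU] using hconj 1
  · rw [hconj, hdiag, submatrix_diagonal_embedding, trace_diagonal,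
      Fin.sum_filter_val_lt_eq_sum_castLE hkd]
    simp [ι, he]

lemma exists_traces_eq_sum_filter_lt {d k : ℕ} (hkd : k ≤ d) {V : Matrix (Fin d) (Fin d) ℂ}
    {σ : Fin d → ℝ} {e : Equiv.Perm (Fin d)}
    (he : ∀ i, σ i = (isHermitian_mul_conjTranspose_self V).eigenvalues (e i)) :
    ∃ M N : Matrix (Fin d) (Fin k) ℂ,
      (Nᴴ * V * M).trace = ∑ i ∈ univ.filter (fun i : Fin d => (i : ℕ) < k), σ i ∧
      ((M * Nᴴ)ᴴ * (M * Nᴴ)).trace = ∑ i ∈ univ.filter (fun i : Fin d => (i : ℕ) < k), σ i := by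
  obtain ⟨N, hNN, hNtr⟩ :=
    (isHermitian_mul_conjTranspose_self V).exists_isometry_trace_eq_sum_filter_lt hkd he
  refine ⟨Vᴴ * N, N, ?_, ?_⟩
  · rw [← hNtr]
    simp only [Matrix.mul_assoc]
  · calc ((Vᴴ * N * Nᴴ)ᴴ * (Vᴴ * N * Nᴴ)).trace = (N * (Nᴴ * V * Vᴴ * N * Nᴴ)).trace := by
          simp only [conjTranspose_mul, conjTranspose_conjTranspose, Matrix.mul_assoc]
      _ = (Nᴴ * V * Vᴴ * N * (Nᴴ * N)).trace := by
          rw [trace_mul_comm]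
          simp only [Matrix.mul_assoc]
      _ = _ := by
          rw [hNN, Matrix.mul_one, ← hNtr]
          simp only [Matrix.mul_assoc]

end Matrix

/-- `φ_λ(x) = Tr(x)·1 − λ V x V*` is `k`-positive iff `λ‖V‖_{(k)}² ≤ 1`, where `‖V‖_{(k)}²`
is the sum of the `k` largest eigenvalues of `V V*`, expressed via an antitone enumeration
`σ` of those eigenvalues. -/
theorem kPositive_iff_kyFan {d : ℕ} (V : Matrix (Fin d) (Fin d) ℂ) (k : ℕ)
    (hk1 : 1 ≤ k) (hkd : k ≤ d) (lam : ℝ) (hlam : 0 ≤ lam)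
    (σ : Fin d → ℝ) (hσ : Antitone σ)
    (hperm : ∃ e : Equiv.Perm (Fin d),
      ∀ i, σ i = (Matrix.isHermitian_mul_conjTranspose_self V).eigenvalues (e i)) :
    kPositive k (fun x => x.trace • (1 : Matrix (Fin d) (Fin d) ℂ) - (lam : ℂ) • (V * x * Vᴴ))
      ↔ lam * ∑ i ∈ Finset.univ.filter (fun i : Fin d => (i : ℕ) < k), σ i ≤ 1 := by
  obtain ⟨e, he⟩ := hperm
  set s := ∑ i ∈ univ.filter (fun i : Fin d => (i : ℕ) < k), σ i
  have hs0 : 0 ≤ s :=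
    Finset.sum_nonneg fun i _ => he i ▸ (posSemidef_self_mul_conjTranspose V).eigenvalues_nonneg _
  change kPositive k (traceSubConj V lam) ↔ _
  rw [kPositive_traceSubConj_iff]
  refine ⟨fun h => ?_, fun h M N => ?_⟩
  · obtain ⟨M, N, htr, hfrob⟩ := exists_traces_eq_sum_filter_lt hkd he
    have hMN := h M N
    rw [htr, hfrob, normSq_ofReal, ofReal_re] at hMN
    rcases hs0.eq_or_lt with hs | hs
    · rw [← hs, mul_zero]
      exact zero_le_one
    · nlinarith
  · calc lam * normSq (Nᴴ * V * M).trace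
        ≤ lam * (s * ((M * Nᴴ)ᴴ * (M * Nᴴ)).trace.re) :=
          mul_le_mul_of_nonneg_left (normSq_trace_le_sum_filter_lt_mul hk1 hkd hσ he M N) hlam
      _ = lam * s * ((M * Nᴴ)ᴴ * (M * Nᴴ)).trace.re := by ring
      _ ≤ ((M * Nᴴ)ᴴ * (M * Nᴴ)).trace.re :=
          mul_le_of_le_one_left (le_def.mp (posSemidef_conjTranspose_mul_self _).trace_nonneg).1 h
end

section
/- For V ∈ M_d(C) and λ ≥ 0, the map φ_λ(x) = Tr(x)·1 − λ V x V* is completely positive if and only if λ ‖V‖_HS² ≤ 1, i.e., λ Tr(V V*) ≤ 1. -/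
/-!
Choi's theorem reduces complete positivity of a linear map `φ` on `M_d(ℂ)` to positive
semidefiniteness of its Choi matrix `C_φ = ∑ e_rs ⊗ φ(e_rs)`: necessity is `d`-positivity applied
to `|w⟩⟨w|` with `w = ∑ e_r ⊗ e_r`, and sufficiency comes from writing
`C_φ = ∑ |v_t⟩⟨v_t|`, which exhibits `φ` in Kraus form `x ↦ ∑ K_t x K_t*`. For
`φ_λ(x) = Tr(x)·1 − λ V x V*` the Choi matrix is `1 − λ |vec V⟩⟨vec V|`, which is positive
semidefinite iff `λ ‖vec V‖² ≤ 1` by Cauchy–Schwarz, and `‖vec V‖² = Tr(V V*)`.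
-/

open scoped Matrix ComplexOrder

/-- A map is completely positive if it is `k`-positive for all `k`. -/
def CompletelyPositive {ι : Type} [Fintype ι] [DecidableEq ι]
    (φ : Matrix ι ι ℂ → Matrix ι ι ℂ) : Prop :=
  ∀ k : ℕ, kPositive k φ

open scoped InnerProductSpace Kronecker
open Matrix

section InnerProduct

variable {𝕜 E : Type*} [RCLike 𝕜] [NormedAddCommGroup E] [InnerProductSpace 𝕜 E]

theorem forall_mul_norm_inner_sq_le_iff (c : ℝ) (x : E) :
    (∀ y : E, c * ‖⟪x, y⟫_𝕜‖ ^ 2 ≤ ‖y‖ ^ 2) ↔ c * ‖x‖ ^ 2 ≤ 1 := by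
  constructor
  · intro h
    have hx := h x
    rw [inner_self_eq_norm_sq_to_K, norm_pow, RCLike.norm_ofReal, abs_norm] at hx
    rcases (sq_nonneg ‖x‖).eq_or_lt with hx0 | hx0
    · simp [← hx0]
    · have : 0 ≤ ‖x‖ ^ 2 * (1 - c * ‖x‖ ^ 2) := by linarith
      linarith [(mul_nonneg_iff_of_pos_left hx0).mp this]
  · intro h y
    have hcs : ‖⟪x, y⟫_𝕜‖ ^ 2 ≤ ‖x‖ ^ 2 * ‖y‖ ^ 2 := by
      rw [← mul_pow]
      exact pow_le_pow_left₀ (norm_nonneg _) (norm_inner_le_norm x y) 2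
    rcases le_or_gt c 0 with hc | hc
    · nlinarith [sq_nonneg ‖⟪x, y⟫_𝕜‖, sq_nonneg ‖y‖]
    · nlinarith [mul_le_mul_of_nonneg_left hcs hc.le, sq_nonneg ‖y‖]

theorem EuclideanSpace.norm_toLp_sq {n : Type*} [Fintype n] (v : n → 𝕜) :
    ‖WithLp.toLp 2 v‖ ^ 2 = RCLike.re (star v ⬝ᵥ v) := by
  rw [← inner_self_eq_norm_sq (𝕜 := 𝕜), EuclideanSpace.inner_toLp_toLp, dotProduct_comm]

end InnerProduct

namespace Matrix

variable {𝕜 n : Type*} [RCLike 𝕜] [Fintype n] [DecidableEq n]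

theorem star_dotProduct_one_sub_smul_vecMulVec_mulVec (c : ℝ) (v y : n → 𝕜) :
    star y ⬝ᵥ ((1 - (c : 𝕜) • vecMulVec v (star v)) *ᵥ y)
      = ((‖WithLp.toLp 2 y‖ ^ 2 - c * ‖⟪WithLp.toLp 2 v, WithLp.toLp 2 y⟫_𝕜‖ ^ 2 : ℝ) : 𝕜) := by
  have hy : star y ⬝ᵥ y = (‖WithLp.toLp 2 y‖ : 𝕜) ^ 2 := by
    rw [← inner_self_eq_norm_sq_to_K, EuclideanSpace.inner_toLp_toLp, dotProduct_comm]
  have hvy : (star v ⬝ᵥ y) * (star y ⬝ᵥ v)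
      = (‖⟪WithLp.toLp 2 v, WithLp.toLp 2 y⟫_𝕜‖ : 𝕜) ^ 2 := by
    rw [← RCLike.conj_mul, EuclideanSpace.inner_toLp_toLp, dotProduct_comm y, star_dotProduct y v,
      mul_comm]
    rfl
  rw [sub_mulVec, one_mulVec, smul_mulVec, vecMulVec_mulVec, op_smul_eq_smul, dotProduct_sub,
    dotProduct_smul, dotProduct_smul, smul_eq_mul, smul_eq_mul, hy, hvy]
  push_cast
  rfl

theorem posSemidef_one_sub_smul_vecMulVec_iff (c : ℝ) (v : n → 𝕜) :
    (1 - (c : 𝕜) • vecMulVec v (star v)).PosSemidef ↔ c * RCLike.re (star v ⬝ᵥ v) ≤ 1 := by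
  have hherm : (1 - (c : 𝕜) • vecMulVec v (star v)).IsHermitian :=
    isHermitian_one.sub <|
      (posSemidef_vecMulVec_self_star v).isHermitian.smul (RCLike.conj_ofReal c)
  simp only [posSemidef_iff_dotProduct_mulVec, star_dotProduct_one_sub_smul_vecMulVec_mulVec,
    RCLike.ofReal_nonneg, sub_nonneg, ← EuclideanSpace.norm_toLp_sq, hherm, true_and]
  rw [← forall_mul_norm_inner_sq_le_iff (𝕜 := 𝕜)]
  exact ⟨fun h y => h y.ofLp, fun h y => h _⟩

end Matrix

section Choi

variable {ι : Type}

def ampliation (k : ℕ) (φ : Matrix ι ι ℂ → Matrix ι ι ℂ)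
    (X : Matrix (ι × Fin k) (ι × Fin k) ℂ) : Matrix (ι × Fin k) (ι × Fin k) ℂ :=
  of fun p q => φ (of fun i j => X (i, p.2) (j, q.2)) p.1 q.1

theorem ampliation_sum {τ : Type*} [Fintype τ] (k : ℕ) (φ : τ → Matrix ι ι ℂ → Matrix ι ι ℂ)
    (X : Matrix (ι × Fin k) (ι × Fin k) ℂ) :
    ampliation k (fun x => ∑ t, φ t x) X = ∑ t, ampliation k (φ t) X := by
  ext p q
  simp [ampliation, Matrix.sum_apply]

variable [Fintype ι]

theorem ampliation_mul_mul_conjTranspose (k : ℕ) (K : Matrix ι ι ℂ)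
    (X : Matrix (ι × Fin k) (ι × Fin k) ℂ) :
    ampliation k (fun x => K * x * Kᴴ) X = (K ⊗ₖ 1) * X * (K ⊗ₖ 1)ᴴ := by
  ext ⟨a, r⟩ ⟨b, s⟩
  simp [ampliation, mul_apply, Fintype.sum_prod_type, one_apply, conjTranspose_apply, apply_ite]

variable [DecidableEq ι]

theorem completelyPositive_sum_mul_mul_conjTranspose {τ : Type*} [Fintype τ]
    (K : τ → Matrix ι ι ℂ) : CompletelyPositive fun x => ∑ t, K t * x * (K t)ᴴ := by
  intro k X hX
  change (ampliation k (fun x => ∑ t, K t * x * (K t)ᴴ) X).PosSemidef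
  simp only [ampliation_sum, ampliation_mul_mul_conjTranspose]
  exact posSemidef_sum _ fun t _ => hX.mul_mul_conjTranspose_same _

/-- The Choi matrix `∑ e_rs ⊗ φ(e_rs)`, indexed by (input index, output index). -/
def choiMatrix (φ : Matrix ι ι ℂ → Matrix ι ι ℂ) : Matrix (ι × ι) (ι × ι) ℂ :=
  of fun p q => φ (single p.1 q.1 1) p.2 q.2

theorem kPositive.posSemidef_choiMatrix {φ : Matrix ι ι ℂ → Matrix ι ι ℂ}
    (hφ : kPositive (Fintype.card ι) φ) : (choiMatrix φ).PosSemidef := by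
  let e := Fintype.equivFin ι
  let w : ι × Fin (Fintype.card ι) → ℂ := fun p => if e.symm p.2 = p.1 then 1 else 0
  let σ : ι × Fin (Fintype.card ι) ≃ ι × ι :=
    (Equiv.prodComm _ _).trans (Equiv.prodCongr e.symm (.refl ι))
  have h : (choiMatrix φ).submatrix σ σ = ampliation _ φ (vecMulVec w (star w)) := by
    ext ⟨a, r⟩ ⟨b, s⟩
    simp only [choiMatrix, ampliation, w, σ, submatrix_apply, of_apply, Equiv.trans_apply,
      Equiv.prodComm_apply, Prod.swap_prod_mk, Equiv.prodCongr_apply, Prod.map_fst, Prod.map_snd,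
      Equiv.coe_refl, id]
    congr 1
    ext i j
    simp [single, vecMulVec_apply, ← ite_and, and_comm]
  rw [← posSemidef_submatrix_equiv σ, h]
  exact hφ _ (posSemidef_vecMulVec_self_star w)

theorem exists_sum_mul_mul_conjTranspose_of_posSemidef_choiMatrix
    (f : Matrix ι ι ℂ →ₗ[ℂ] Matrix ι ι ℂ) (hf : (choiMatrix f).PosSemidef) :
    ∃ (m : ℕ) (K : Fin m → Matrix ι ι ℂ), ⇑f = fun x => ∑ t, K t * x * (K t)ᴴ := by
  obtain ⟨m, v, hv⟩ := posSemidef_iff_eq_sum_vecMulVec.mp hf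
  refine ⟨m, fun t => of fun a r => v t (r, a), ?_⟩
  have hchoi (r s a b : ι) : f (single r s 1) a b = ∑ t, v t (r, a) * star (v t (s, b)) := by
    simpa [choiMatrix, Matrix.sum_apply, vecMulVec_apply] using
      congrFun (congrFun hv (r, a)) (s, b)
  ext x a b
  have hx : x = ∑ r, ∑ s, x r s • single r s (1 : ℂ) := by
    simp only [smul_single, smul_eq_mul, mul_one]
    exact matrix_eq_sum_single x
  conv_lhs => rw [hx]
  simp only [map_sum, map_smul, Matrix.sum_apply, Matrix.smul_apply, hchoi]
  simp only [mul_apply, of_apply, conjTranspose_apply, smul_eq_mul, Finset.mul_sum,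
    Finset.sum_mul]
  rw [Finset.sum_comm_cycle]
  refine Finset.sum_congr rfl fun t _ => ?_
  rw [Finset.sum_comm]
  exact Finset.sum_congr rfl fun s _ => Finset.sum_congr rfl fun r _ => by ring

theorem completelyPositive_iff_posSemidef_choiMatrix (f : Matrix ι ι ℂ →ₗ[ℂ] Matrix ι ι ℂ) :
    CompletelyPositive f ↔ (choiMatrix f).PosSemidef := by
  refine ⟨fun hf => (hf _).posSemidef_choiMatrix, fun hf => ?_⟩
  obtain ⟨m, K, hK⟩ := exists_sum_mul_mul_conjTranspose_of_posSemidef_choiMatrix f hf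
  rw [hK]
  exact completelyPositive_sum_mul_mul_conjTranspose K

def traceSmulOneSubConj (c : ℂ) (V : Matrix ι ι ℂ) : Matrix ι ι ℂ →ₗ[ℂ] Matrix ι ι ℂ where
  toFun x := x.trace • 1 - c • (V * x * Vᴴ)
  map_add' x y := by
    simp only [trace_add, add_smul, mul_add, add_mul, smul_add]
    abel
  map_smul' a x := by
    simp only [trace_smul, smul_eq_mul, mul_smul, Matrix.mul_smul, Matrix.smul_mul, smul_sub,
      RingHom.id_apply, smul_comm c a]

theorem choiMatrix_traceSmulOneSubConj (c : ℂ) (V : Matrix ι ι ℂ) :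
    choiMatrix (traceSmulOneSubConj c V) = 1 - c • vecMulVec (vec V) (star (vec V)) := by
  ext ⟨r, a⟩ ⟨s, b⟩
  by_cases hrs : r = s <;>
    simp [choiMatrix, traceSmulOneSubConj, vec, vecMulVec_apply, mul_apply, single, one_apply,
      ite_and, trace, hrs, Ne.symm]

end Choi

theorem completelyPositive_iff_hsNorm_general {d : ℕ} (V : Matrix (Fin d) (Fin d) ℂ)
    (lam : ℝ) :
    CompletelyPositive
        (fun x => x.trace • (1 : Matrix (Fin d) (Fin d) ℂ) - (lam : ℂ) • (V * x * Vᴴ))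
      ↔ lam * ((V * Vᴴ).trace).re ≤ 1 := by
  calc CompletelyPositive _
      ↔ (choiMatrix (traceSmulOneSubConj (lam : ℂ) V)).PosSemidef :=
        completelyPositive_iff_posSemidef_choiMatrix _
    _ ↔ (1 - (lam : ℂ) • vecMulVec (vec V) (star (vec V))).PosSemidef := by
        rw [choiMatrix_traceSmulOneSubConj]
    _ ↔ lam * (star (vec V) ⬝ᵥ vec V).re ≤ 1 := posSemidef_one_sub_smul_vecMulVec_iff lam (vec V)
    _ ↔ lam * ((V * Vᴴ).trace).re ≤ 1 := by rw [star_vec_dotProduct_vec, trace_mul_comm]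

/-- `φ_λ(x) = Tr(x)·1 − λ V x V*` is completely positive iff `λ Tr(V V*) ≤ 1`. -/
theorem completelyPositive_iff_hsNorm {d : ℕ} (V : Matrix (Fin d) (Fin d) ℂ)
    (lam : ℝ) (hlam : 0 ≤ lam) :
    CompletelyPositive
        (fun x => x.trace • (1 : Matrix (Fin d) (Fin d) ℂ) - (lam : ℂ) • (V * x * Vᴴ))
      ↔ lam * ((V * Vᴴ).trace).re ≤ 1 :=
  completelyPositive_iff_hsNorm_general V lam
end

section
/- Let φ : M_d(C) → M_d(C) be linear and k ∈ {1,…,d}. Then φ is k-positive if and only if for every orthogonal projection F of rank k, the map x ↦ F φ(x) F is completely positive. -/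
open scoped Matrix ComplexOrder

/-!
If `rank F = k`, then `(F ⊗ 1) v` has Schmidt rank at most `k` for every `v`: it lies in the range
of `1 ⊗ C` for some `C` with `k` columns. Since `φ ⊗ id` commutes with conjugation by `1 ⊗ C`,
the quadratic form of `(Ad_F ∘ φ) ⊗ id_m = Ad_{F ⊗ 1} ∘ (φ ⊗ id_m)` at `v` is a value of the
quadratic form of `(φ ⊗ id_k)((1 ⊗ C)ᴴ X (1 ⊗ C))`, which is nonnegative by `k`-positivity.
Conversely, every `v ∈ ℂᵈ ⊗ ℂᵏ` is fixed by `F ⊗ 1` for the orthogonal projection `F` onto some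
`k`-dimensional subspace containing the `k` columns of `v`, and then both quadratic forms agree
at `v`.
-/

open scoped Kronecker
open Matrix Module

theorem exists_fun_fin_range_subset_span_of_finrank_le {K V ι : Type*} [DivisionRing K]
    [AddCommGroup V] [Module K V] [Finite ι] {v : ι → V} {k : ℕ}
    (hv : finrank K (Submodule.span K (Set.range v)) ≤ k) :
    ∃ g : Fin k → V, Set.range v ⊆ Submodule.span K (Set.range g) := by
  have := FiniteDimensional.span_of_finite K (Set.finite_range v)
  obtain ⟨f, -, hf, -⟩ := Submodule.exists_fun_fin_finrank_span_eq K (Set.range v)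
  refine ⟨fun c => if h : (c : ℕ) < finrank K (Submodule.span K (Set.range v)) then f ⟨c, h⟩
    else 0, Submodule.subset_span.trans (hf.symm.le.trans (Submodule.span_mono ?_))⟩
  rintro _ ⟨i, rfl⟩
  exact ⟨Fin.castLE hv i, by simp⟩

theorem Matrix.exists_mul_eq_of_rank_le {m n K : Type*} [Fintype n] [Field K]
    {A : Matrix m n K} {k : ℕ} (hA : A.rank ≤ k) :
    ∃ (B : Matrix m (Fin k) K) (C : Matrix (Fin k) n K), B * C = A := by
  rw [rank_eq_finrank_span_cols] at hA
  obtain ⟨g, hg⟩ := exists_fun_fin_range_subset_span_of_finrank_le hA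
  choose C hC using fun j => (Submodule.mem_span_range_iff_exists_fun K).mp (hg ⟨j, rfl⟩)
  refine ⟨of fun i c => g c i, of fun c j => C j c, ?_⟩
  ext i j
  rw [show A i j = A.col j i from rfl, ← hC j]
  simp [mul_apply, Finset.sum_apply, mul_comm]

theorem Submodule.exists_le_finrank_eq {K V : Type*} [DivisionRing K] [AddCommGroup V]
    [Module K V] [FiniteDimensional K V] (W : Submodule K V) {k : ℕ} (hW : finrank K W ≤ k)
    (hk : k ≤ finrank K V) : ∃ S : Submodule K V, W ≤ S ∧ finrank K S = k := by
  obtain ⟨C, hC⟩ := W.exists_isCompl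
  have hWC := Submodule.finrank_add_eq_of_isCompl hC
  obtain ⟨f, hf⟩ := exists_linearIndependent_of_le_finrank (R := K) (M := C)
    (n := k - finrank K W) (by omega)
  set T := span K (Set.range (C.subtype ∘ f))
  have hT : finrank K T = k - finrank K W := by
    rw [finrank_span_eq_card (hf.map' _ C.ker_subtype), Fintype.card_fin]
  have hWT : W ⊓ T = ⊥ := by
    refine eq_bot_iff.mpr ((inf_le_inf_left W (span_le.mpr ?_)).trans hC.inf_eq_bot.le)
    rintro _ ⟨i, rfl⟩
    exact (f i).2
  refine ⟨W ⊔ T, le_sup_left, ?_⟩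
  have := Submodule.finrank_sup_add_finrank_inf_eq W T
  rw [hWT, finrank_bot] at this
  omega

theorem Matrix.rank_eq_finrank_range_toEuclideanLin {𝕜 m n : Type*} [RCLike 𝕜] [Fintype m]
    [Fintype n] [DecidableEq n] (A : Matrix m n 𝕜) :
    A.rank = finrank 𝕜 (LinearMap.range A.toEuclideanLin) := by
  rw [A.rank_eq_finrank_range_toLin (EuclideanSpace.basisFun m 𝕜).toBasis
    (EuclideanSpace.basisFun n 𝕜).toBasis, toEuclideanLin_eq_toLin_orthonormal]

theorem Matrix.exists_isHermitian_mul_self_rank_mul_eq {ι μ : Type*} [Fintype ι]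
    [DecidableEq ι] [Fintype μ] [DecidableEq μ] {M : Matrix ι μ ℂ} {k : ℕ} (hM : M.rank ≤ k)
    (hk : k ≤ Fintype.card ι) :
    ∃ F : Matrix ι ι ℂ, F.IsHermitian ∧ F * F = F ∧ F.rank = k ∧ F * M = M := by
  obtain ⟨S, hMS, hS⟩ := (LinearMap.range M.toEuclideanLin).exists_le_finrank_eq (k := k)
    (by rwa [← rank_eq_finrank_range_toEuclideanLin]) (by rwa [finrank_euclideanSpace])
  set F : Matrix ι ι ℂ := (toEuclideanCLM (n := ι) (𝕜 := ℂ)).symm S.starProjection with hF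
  have hFS : toEuclideanCLM (n := ι) (𝕜 := ℂ) F = S.starProjection :=
    StarAlgEquiv.apply_symm_apply _ _
  refine ⟨F, ?_, ?_, ?_, ?_⟩
  · rw [isHermitian_iff_isSelfAdjoint, IsSelfAdjoint, hF, ← StarRingEquivClass.map_star,
      (isSelfAdjoint_starProjection S).star_eq]
  · rw [hF, ← map_mul, S.isIdempotentElem_starProjection.eq]
  · rw [rank_eq_finrank_range_toEuclideanLin, ← hS, ← coe_toEuclideanCLM_eq_toEuclideanLin, hFS,
      S.range_starProjection]
  · ext i j
    have hmem : WithLp.toLp 2 (M.col j) ∈ S :=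
      hMS ⟨WithLp.toLp 2 (Pi.single j 1), congrArg (WithLp.toLp 2) (M.mulVec_single_one j)⟩
    have hfix := S.starProjection_eq_self_iff.mpr hmem
    rw [← hFS, toEuclideanCLM_toLp] at hfix
    exact congrFun (congrArg WithLp.ofLp hfix) i

theorem Matrix.posSemidef_of_forall_dotProduct_mulVec_nonneg {n : Type*} [Fintype n]
    [DecidableEq n] {M : Matrix n n ℂ} (h : ∀ x, 0 ≤ star x ⬝ᵥ (M *ᵥ x)) : M.PosSemidef := by
  have hinner (x : EuclideanSpace ℂ n) : 0 ≤ inner ℂ (M.toEuclideanLin x) x := by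
    rw [← inner_conj_symm, EuclideanSpace.inner_eq_star_dotProduct, dotProduct_comm]
    exact star_nonneg_iff.mpr (h x.ofLp)
  rw [← isPositive_toEuclideanLin_iff, LinearMap.isPositive_iff,
    LinearMap.isSymmetric_iff_inner_map_self_real]
  exact ⟨fun x => (IsSelfAdjoint.of_nonneg (hinner x)).star_eq, hinner⟩

theorem Matrix.star_dotProduct_conjTranspose_mul_mul_mulVec {m n R : Type*} [Fintype m]
    [Fintype n] [CommSemiring R] [StarRing R] (B : Matrix m n R) (Z : Matrix m m R) (x : n → R) :
    star x ⬝ᵥ ((Bᴴ * Z * B) *ᵥ x) = star (B *ᵥ x) ⬝ᵥ (Z *ᵥ (B *ᵥ x)) := by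
  simp only [star_mulVec, dotProduct_mulVec, vecMul_vecMul, Matrix.mul_assoc]

/-- `tensorId φ X` is `(φ ⊗ id) X`, so `kPositive k φ` says that `tensorId φ` preserves positive
semidefiniteness of matrices indexed by `ι × Fin k`. -/
def tensorId {ι κ R : Type*} (φ : Matrix ι ι R → Matrix ι ι R) (X : Matrix (ι × κ) (ι × κ) R) :
    Matrix (ι × κ) (ι × κ) R :=
  of fun p q => φ (of fun i j => X (i, p.2) (j, q.2)) p.1 q.1

section TensorId

variable {ι κ μ R : Type*} [Fintype ι]

theorem tensorId_mul_mul [CommSemiring R] [Fintype κ] [DecidableEq κ] (F : Matrix ι ι R)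
    (φ : Matrix ι ι R → Matrix ι ι R) (X : Matrix (ι × κ) (ι × κ) R) :
    tensorId (fun x => F * φ x * F) X =
      (F ⊗ₖ (1 : Matrix κ κ R)) * tensorId φ X * (F ⊗ₖ (1 : Matrix κ κ R)) := by
  ext ⟨i, a⟩ ⟨j, b⟩
  simp [tensorId, mul_apply, one_apply, Fintype.sum_prod_type]

theorem of_one_kronecker_mul_mul_apply [CommSemiring R] [DecidableEq ι] [Fintype μ]
    (B : Matrix κ μ R) (C : Matrix μ κ R) (Y : Matrix (ι × μ) (ι × μ) R) (a b : κ) :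
    (of fun i j => (((1 : Matrix ι ι R) ⊗ₖ B) * Y * ((1 : Matrix ι ι R) ⊗ₖ C)) (i, a) (j, b)) =
      ∑ a', ∑ b', (B a a' * C b' b) • of fun i j => Y (i, a') (j, b') := by
  ext i j
  simp only [mul_apply, kroneckerMap_apply, one_apply, ite_mul, one_mul, zero_mul,
    Fintype.sum_prod_type, Finset.sum_ite_irrel, Finset.sum_const_zero, Finset.sum_ite_eq,
    Finset.mem_univ, ↓reduceIte, mul_ite, Finset.sum_mul, mul_zero, Finset.sum_ite_eq', of_apply,
    smul_of, Matrix.sum_apply, Pi.smul_apply, smul_eq_mul]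
  rw [Finset.sum_comm]
  exact Finset.sum_congr rfl fun _ _ => Finset.sum_congr rfl fun _ _ => by ring

theorem tensorId_one_kronecker_mul_mul [CommSemiring R] [DecidableEq ι] [Fintype μ]
    (φ : Matrix ι ι R →ₗ[R] Matrix ι ι R) (B : Matrix κ μ R) (C : Matrix μ κ R)
    (X : Matrix (ι × μ) (ι × μ) R) :
    tensorId φ (((1 : Matrix ι ι R) ⊗ₖ B) * X * ((1 : Matrix ι ι R) ⊗ₖ C)) =
      ((1 : Matrix ι ι R) ⊗ₖ B) * tensorId φ X * ((1 : Matrix ι ι R) ⊗ₖ C) := by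
  ext ⟨i, a⟩ ⟨j, b⟩
  have hZ := congr_fun₂ (of_one_kronecker_mul_mul_apply B C (tensorId φ X) a b) i j
  simp only [of_apply] at hZ
  rw [hZ]
  simp only [tensorId, of_apply, of_one_kronecker_mul_mul_apply, map_sum, map_smul,
    Matrix.sum_apply, Matrix.smul_apply]

theorem star_vec_dotProduct_tensorId_mul_mul_mulVec_vec [Fintype κ] [DecidableEq κ]
    {F : Matrix ι ι ℂ} (hF : F.IsHermitian) (φ : Matrix ι ι ℂ → Matrix ι ι ℂ)
    (X : Matrix (ι × κ) (ι × κ) ℂ) (Y : Matrix κ ι ℂ) :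
    star (vec Y) ⬝ᵥ (tensorId (fun x => F * φ x * F) X *ᵥ vec Y) =
      star (vec (Y * Fᵀ)) ⬝ᵥ (tensorId φ X *ᵥ vec (Y * Fᵀ)) := by
  have hkron : (F ⊗ₖ (1 : Matrix κ κ ℂ))ᴴ = F ⊗ₖ 1 := by
    rw [conjTranspose_kronecker, hF.eq, conjTranspose_one]
  have hquad := star_dotProduct_conjTranspose_mul_mul_mulVec (F ⊗ₖ 1) (tensorId φ X) (vec Y)
  rw [hkron] at hquad
  rw [tensorId_mul_mul, hquad, kronecker_mulVec_vec, Matrix.one_mul]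

end TensorId

/-- `vec Y` with `Y.rank ≤ k` is a vector of Schmidt rank at most `k`. -/
theorem kPositive.star_vec_dotProduct_tensorId_mulVec_vec_nonneg {ι : Type} {μ : Type*}
    [Fintype ι] [DecidableEq ι] [Fintype μ] [DecidableEq μ] {k : ℕ}
    {φ : Matrix ι ι ℂ →ₗ[ℂ] Matrix ι ι ℂ} (hφ : kPositive k φ)
    {X : Matrix (ι × μ) (ι × μ) ℂ} (hX : X.PosSemidef) {Y : Matrix μ ι ℂ} (hY : Y.rank ≤ k) :
    0 ≤ star (vec Y) ⬝ᵥ (tensorId φ X *ᵥ vec Y) := by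
  obtain ⟨C, A, rfl⟩ := exists_mul_eq_of_rank_le hY
  set C₁ : Matrix (ι × μ) (ι × Fin k) ℂ := (1 : Matrix ι ι ℂ) ⊗ₖ C
  have hCX : (tensorId φ (C₁ᴴ * X * C₁)).PosSemidef := hφ _ (hX.conjTranspose_mul_mul_same C₁)
  have hC₁ : C₁ᴴ = (1 : Matrix ι ι ℂ) ⊗ₖ Cᴴ := by
    rw [conjTranspose_kronecker, conjTranspose_one]
  rw [hC₁, tensorId_one_kronecker_mul_mul, ← hC₁] at hCX
  rw [vec_mul_eq_mulVec, ← star_dotProduct_conjTranspose_mul_mul_mulVec]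
  exact hCX.dotProduct_mulVec_nonneg (vec A)

theorem kPositive_iff_compress_cp_general {d : ℕ}
    (φ : Matrix (Fin d) (Fin d) ℂ →ₗ[ℂ] Matrix (Fin d) (Fin d) ℂ)
    (k : ℕ) (hkd : k ≤ d) :
    kPositive k (fun x => φ x) ↔
      ∀ F : Matrix (Fin d) (Fin d) ℂ, F.IsHermitian → F * F = F → F.rank = k →
        CompletelyPositive (fun x => F * φ x * F) := by
  constructor
  · intro hφ F hF _ hFk m X hX
    refine posSemidef_of_forall_dotProduct_mulVec_nonneg fun v => ?_
    obtain ⟨Y, rfl⟩ := vec_bijective.surjective v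
    change 0 ≤ star (vec Y) ⬝ᵥ (tensorId (fun x => F * φ x * F) X *ᵥ vec Y)
    rw [star_vec_dotProduct_tensorId_mul_mul_mulVec_vec hF]
    refine hφ.star_vec_dotProduct_tensorId_mulVec_vec_nonneg hX ?_
    exact (rank_mul_le_right _ _).trans (by rw [rank_transpose, hFk])
  · intro h X hX
    refine posSemidef_of_forall_dotProduct_mulVec_nonneg fun v => ?_
    obtain ⟨Y, rfl⟩ := vec_bijective.surjective v
    obtain ⟨F, hF, hFF, hFk, hFY⟩ :=
      exists_isHermitian_mul_self_rank_mul_eq (M := Yᵀ) (rank_le_width _) (by simpa using hkd)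
    have hYF : Y * Fᵀ = Y := by rw [← transpose_transpose Y, ← transpose_mul, hFY]
    have hcompress : (tensorId (fun x => F * φ x * F) X).PosSemidef := h F hF hFF hFk k X hX
    have := hcompress.dotProduct_mulVec_nonneg (vec Y)
    rwa [star_vec_dotProduct_tensorId_mul_mul_mulVec_vec hF, hYF] at this

/-- A linear map `φ` on `M_d(ℂ)` is `k`-positive iff for every orthogonal projection `F` of
rank `k` the map `x ↦ F φ(x) F` is completely positive. -/
theorem kPositive_iff_compress_cp {d : ℕ}
    (φ : Matrix (Fin d) (Fin d) ℂ →ₗ[ℂ] Matrix (Fin d) (Fin d) ℂ)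
    (k : ℕ) (hk1 : 1 ≤ k) (hkd : k ≤ d) :
    kPositive k (fun x => φ x) ↔
      ∀ F : Matrix (Fin d) (Fin d) ℂ, F.IsHermitian → F * F = F → F.rank = k →
        CompletelyPositive (fun x => F * φ x * F) :=
  kPositive_iff_compress_cp_general φ k hkd
end
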